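/- For every real u ≥ 0, the 2×2 Wronskian-type determinant satisfies Φ(u)Φ''(u) - Φ'(u)^2 < 0, i.e. det [[Φ(u), Φ'(u)], [Φ'(u), Φ''(u)]] < 0, where Φ', Φ'' denote the first and second derivatives of Φ. -/

import Mathlib

open Real

/-- The Riemann ξ-related function
`Φ(u) = ∑_{m=1}^∞ (2π²m⁴e^{9u} - 3πm²e^{5u}) exp(-πm²e^{4u})`. -/
noncomputable def Phi (u : ℝ) : ℝ :=
  ∑' m : ℕ, (2 * π^2 * ((m : ℝ) + 1)^4 * Real.exp (9*u)
      - 3 * π * ((m : ℝ) + 1)^2 * Real.exp (5*u))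
    * Real.exp (-π * ((m : ℝ) + 1)^2 * Real.exp (4*u))

/-!
With `x = π e^{4u}`, the `n`-th term of `Φ` is `e^u p(n²x) e^{-n²x}` for `p(y) = 2y² - 3y`, and
differentiating such a term in `u` replaces `p` by `p + 4y(p' - p)`. Hence `Φ`, `Φ'`, `Φ''` are
`e^u e^{-x}` times `pₖ(x)` plus a tail of relative size `O(e^{-3x})`, where
`p₀p₂ - p₁² = -16x³(4x² - 12x + 15) < 0`. For `u ≥ 0` we have `x ≥ π`, and then the tails are too
small to change the sign.
-/

open Polynomial Set

noncomputable section

def thetaTerm (p : ℝ[X]) (a u : ℝ) : ℝ :=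
  exp u * p.eval (a * exp (4 * u)) * exp (-(a * exp (4 * u)))

def thetaDeriv (p : ℝ[X]) : ℝ[X] := p + 4 * X * (derivative p - p)

def thetaSeries (p : ℝ[X]) (u : ℝ) : ℝ := ∑' n : ℕ, thetaTerm p (π * ((n : ℝ) + 1) ^ 2) u

theorem hasDerivAt_thetaTerm (p : ℝ[X]) (a u : ℝ) :
    HasDerivAt (thetaTerm p a) (thetaTerm (thetaDeriv p) a u) u := by
  have hy : HasDerivAt (fun u => a * exp (4 * u)) (4 * (a * exp (4 * u))) u :=
    (((hasDerivAt_id' u).const_mul 4).exp.const_mul a).congr_deriv (by ring)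
  refine (((hasDerivAt_exp u).fun_mul ((p.hasDerivAt _).comp u hy)).fun_mul
    hy.fun_neg.exp).congr_deriv ?_
  simp only [thetaTerm, thetaDeriv, eval_add, eval_mul, eval_sub, eval_ofNat, eval_X,
    Function.comp_apply]
  ring

theorem exists_abs_eval_mul_exp_neg_le (p : ℝ[X]) :
    ∃ K, ∀ y, 0 ≤ y → |p.eval y| * exp (-y) ≤ K := by
  induction p using Polynomial.induction_on' with
  | add p q hp hq =>
    obtain ⟨K, hK⟩ := hp
    obtain ⟨L, hL⟩ := hq
    refine ⟨K + L, fun y hy => ?_⟩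
    calc |(p + q).eval y| * exp (-y) ≤ (|p.eval y| + |q.eval y|) * exp (-y) := by
          rw [eval_add]; gcongr; exact abs_add_le _ _
      _ ≤ K + L := by rw [add_mul]; exact add_le_add (hK y hy) (hL y hy)
  | monomial n c =>
    refine ⟨|c| * n.factorial, fun y hy => ?_⟩
    have hpow : y ^ n * exp (-y) ≤ n.factorial := by
      have := Real.pow_div_factorial_le_exp y hy n
      rw [div_le_iff₀ (by positivity)] at this
      rw [exp_neg, ← div_eq_mul_inv, div_le_iff₀ (exp_pos y)]
      linarith
    rw [eval_monomial, abs_mul, abs_pow, abs_of_nonneg hy, mul_assoc]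
    gcongr

-- `e^u ≤ e^{-3c} e^{4u} = e^{-3c} y / a` at the evaluation point `y = a e^{4u}`, whence `X * p`.
theorem abs_thetaTerm_le {p : ℝ[X]} {K a c u : ℝ}
    (hK : ∀ y, 0 ≤ y → |(X * p).eval y| * exp (-y) ≤ K) (ha : 0 < a) (hcu : c ≤ u) :
    |thetaTerm p a u| ≤ exp (-(3 * c)) * K / a := by
  set y := a * exp (4 * u) with hy_def
  have hy : 0 < y := by positivity
  have hexp : exp u ≤ exp (-(3 * c)) * (y / a) := by
    rw [hy_def, mul_div_cancel_left₀ _ ha.ne', ← exp_add]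
    exact exp_le_exp.mpr (by linarith)
  calc |thetaTerm p a u| = exp u * (|p.eval y| * exp (-y)) := by
        rw [thetaTerm, abs_mul, abs_mul, abs_of_pos (exp_pos _), abs_of_pos (exp_pos _)]; ring
    _ ≤ exp (-(3 * c)) * (y / a) * (|p.eval y| * exp (-y)) := by gcongr
    _ = exp (-(3 * c)) * (|(X * p).eval y| * exp (-y)) / a := by
        rw [eval_mul, eval_X, abs_mul, abs_of_pos hy]; ring
    _ ≤ exp (-(3 * c)) * K / a := by gcongr; exact hK y hy.le

theorem summable_div_pi_mul_sq (C : ℝ) :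
    Summable fun n : ℕ => C / (π * ((n : ℝ) + 1) ^ 2) := by
  have h : Summable fun n : ℕ => 1 / ((n + 1 : ℕ) : ℝ) ^ 2 :=
    (summable_nat_add_iff 1).2 (Real.summable_one_div_nat_pow.2 one_lt_two)
  push_cast at h
  refine (h.mul_left (C / π)).congr fun n => ?_
  field_simp

theorem summable_thetaTerm (p : ℝ[X]) (u : ℝ) :
    Summable fun n : ℕ => thetaTerm p (π * ((n : ℝ) + 1) ^ 2) u := by
  obtain ⟨K, hK⟩ := exists_abs_eval_mul_exp_neg_le (X * p)
  exact .of_norm_bounded (summable_div_pi_mul_sq _) fun n =>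
    abs_thetaTerm_le hK (by positivity) le_rfl

theorem hasDerivAt_thetaSeries (p : ℝ[X]) (u : ℝ) :
    HasDerivAt (thetaSeries p) (thetaSeries (thetaDeriv p) u) u := by
  obtain ⟨K, hK⟩ := exists_abs_eval_mul_exp_neg_le (X * thetaDeriv p)
  exact hasDerivAt_tsum_of_isPreconnected (summable_div_pi_mul_sq _) isOpen_Ioi
    isPreconnected_Ioi (fun n y _ => hasDerivAt_thetaTerm p _ y)
    (fun n y hy => abs_thetaTerm_le hK (by positivity) (le_of_lt (mem_Ioi.1 hy)))
    (mem_Ioi.2 (sub_one_lt u)) (summable_thetaTerm p u) (mem_Ioi.2 (sub_one_lt u))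

theorem deriv_thetaSeries (p : ℝ[X]) : deriv (thetaSeries p) = thetaSeries (thetaDeriv p) :=
  funext fun u => (hasDerivAt_thetaSeries p u).deriv

def phiPoly : ℝ[X] := 2 * X ^ 2 - 3 * X

theorem Phi_eq_thetaSeries : Phi = thetaSeries phiPoly := by
  funext u
  refine tsum_congr fun n => ?_
  have h9 : exp (9 * u) = exp u * exp (4 * u) ^ 2 := by rw [sq, ← exp_add, ← exp_add]; ring_nf
  have h5 : exp (5 * u) = exp u * exp (4 * u) := by rw [← exp_add]; ring_nf
  simp only [thetaTerm, phiPoly, eval_sub, eval_mul, eval_pow, eval_ofNat, eval_X, h9, h5]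
  ring_nf

theorem eval_phiPoly (y : ℝ) : phiPoly.eval y = 2 * y ^ 2 - 3 * y := by
  simp [phiPoly]

theorem eval_thetaDeriv_phiPoly (y : ℝ) :
    (thetaDeriv phiPoly).eval y = -8 * y ^ 3 + 30 * y ^ 2 - 15 * y := by
  simp [thetaDeriv, phiPoly]; ring

theorem eval_thetaDeriv_thetaDeriv_phiPoly (y : ℝ) :
    (thetaDeriv (thetaDeriv phiPoly)).eval y =
      32 * y ^ 4 - 224 * y ^ 3 + 330 * y ^ 2 - 75 * y := by
  simp [thetaDeriv, phiPoly]; ring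

theorem abs_eval_phiPoly_le {y : ℝ} (hy : π ≤ y) : |phiPoly.eval y| ≤ 2 * y ^ 2 := by
  have := pi_gt_three
  rw [eval_phiPoly, abs_le]; constructor <;> nlinarith

theorem abs_eval_thetaDeriv_phiPoly_le {y : ℝ} (hy : π ≤ y) :
    |(thetaDeriv phiPoly).eval y| ≤ 8 * y ^ 3 := by
  have := pi_gt_three
  rw [eval_thetaDeriv_phiPoly, abs_le]; constructor <;> nlinarith [sq_nonneg (4 * y - 15 / 4)]

theorem abs_eval_thetaDeriv_thetaDeriv_phiPoly_le {y : ℝ} (hy : π ≤ y) :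
    |(thetaDeriv (thetaDeriv phiPoly)).eval y| ≤ 32 * y ^ 4 := by
  have := pi_gt_three
  have hy0 : 0 < y := by linarith
  rw [eval_thetaDeriv_thetaDeriv_phiPoly, abs_le]
  constructor <;> nlinarith [sq_nonneg (y - 3), mul_pos hy0 hy0]

theorem exp_pi_gt : 22 < exp π := by
  have h1 : (2.718 : ℝ) ^ 3 ≤ exp 1 ^ 3 := by gcongr; linarith [exp_one_gt_d9]
  have h2 : (1.14 : ℝ) ≤ exp 0.14 := by linarith [add_one_le_exp 0.14]
  calc (22 : ℝ) < 2.718 ^ 3 * 1.14 := by norm_num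
    _ ≤ exp 1 ^ 3 * exp 0.14 := by gcongr
    _ = exp 3.14 := by rw [← exp_nat_mul, ← exp_add]; norm_num
    _ < exp π := exp_lt_exp.2 pi_gt_d2

theorem exp_neg_lt_of_pi_le {x : ℝ} (hx : π ≤ x) : exp (-x) < 1 / 22 := by
  rw [exp_neg, one_div]
  exact inv_strictAnti₀ (by norm_num) (exp_pi_gt.trans_le (exp_le_exp.2 hx))

-- `e^{3x} ≥ e^{3π}(1 + 3(x - π))` by convexity, and `x ≤ π(1 + 3(x - π))`.
theorem mul_exp_neg_three_mul_le {x : ℝ} (hx : π ≤ x) : x * exp (-(3 * x)) ≤ π / 22 ^ 3 := by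
  have hlin : 1 + 3 * (x - π) ≤ exp (3 * (x - π)) := by linarith [add_one_le_exp (3 * (x - π))]
  have hexp : 22 ^ 3 * (1 + 3 * (x - π)) ≤ exp (3 * x) := by
    calc 22 ^ 3 * (1 + 3 * (x - π)) ≤ exp π ^ 3 * exp (3 * (x - π)) := by
          gcongr; exact exp_pi_gt.le
      _ = exp (3 * x) := by rw [← exp_nat_mul, ← exp_add]; ring_nf
  calc x * exp (-(3 * x)) ≤ π * (1 + 3 * (x - π)) * exp (-(3 * x)) := by
        gcongr; nlinarith [pi_gt_three]
    _ ≤ π * (exp (3 * x) / 22 ^ 3) * exp (-(3 * x)) := by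
        gcongr; rw [le_div_iff₀ (by norm_num)]; linarith
    _ = π / 22 ^ 3 := by rw [exp_neg]; field_simp

theorem mul_exp_neg_four_mul_le {x : ℝ} (hx : π ≤ x) : 256 * exp (-(4 * x)) ≤ 1 / 500 := by
  have h4 : exp (-(4 * x)) = exp (-x) ^ 4 := by rw [← exp_nat_mul]; ring_nf
  have : exp (-x) ^ 4 ≤ (1 / 22) ^ 4 := by gcongr; exact (exp_neg_lt_of_pi_le hx).le
  rw [h4]
  linarith

-- Since `(m + 2)⁸ ≤ 256^(m+1)` and `(m + 2)² ≥ 4(m + 1)`, the `(m + 2)`-th term is at most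
-- `e^u c xʲ (256 e^{-4x})^(m+1)`; summing this geometric series and dividing by the scale
-- `e^u e^{-x}` of the first term gives this ratio.
def thetaTailRatio (x : ℝ) : ℝ := 256 * exp (-(3 * x)) / (1 - 256 * exp (-(4 * x)))

theorem thetaTailRatio_bounds {x : ℝ} (hx : π ≤ x) :
    0 ≤ thetaTailRatio x ∧ thetaTailRatio x ≤ 1 / 40 ∧ x * thetaTailRatio x ≤ 0.076 := by
  have hr := mul_exp_neg_four_mul_le hx
  have hden : 499 / 500 ≤ 1 - 256 * exp (-(4 * x)) := by linarith
  have h3 : exp (-(3 * x)) = exp (-x) ^ 3 := by rw [← exp_nat_mul]; ring_nf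
  have hq3 : exp (-(3 * x)) ≤ (1 / 22) ^ 3 := by
    rw [h3]; gcongr; exact (exp_neg_lt_of_pi_le hx).le
  have hxq := mul_exp_neg_three_mul_le hx
  have hpi : π / 22 ^ 3 ≤ 3.15 / 22 ^ 3 := by gcongr; exact pi_lt_d2.le
  unfold thetaTailRatio
  refine ⟨by positivity, ?_, ?_⟩
  · rw [div_le_iff₀ (by linarith)]; nlinarith
  · rw [← mul_div_assoc, div_le_iff₀ (by linarith)]; nlinarith

theorem pi_le_pi_mul_exp_four_mul {u : ℝ} (hu : 0 ≤ u) : π ≤ π * exp (4 * u) :=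
  le_mul_of_one_le_right pi_pos.le (one_le_exp (by linarith))

theorem abs_thetaTerm_tail_le {p : ℝ[X]} {c : ℝ} {j : ℕ} (hj : j ≤ 4)
    (hp : ∀ y, π ≤ y → |p.eval y| ≤ c * y ^ j) {u : ℝ} (hu : 0 ≤ u) (m : ℕ) :
    |thetaTerm p (π * ((m : ℝ) + 2) ^ 2) u| ≤
      exp u * (c * (π * exp (4 * u)) ^ j) * (256 * exp (-(4 * (π * exp (4 * u))))) ^ (m + 1) := by
  set x := π * exp (4 * u) with hx_def
  set k : ℝ := (m : ℝ) + 2 with hk_def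
  have hx : π ≤ x := pi_le_pi_mul_exp_four_mul hu
  have hx0 : 0 ≤ x := pi_pos.le.trans hx
  have hk : 2 ≤ k := by simp [hk_def]
  have hc : 0 ≤ c :=
    nonneg_of_mul_nonneg_left ((abs_nonneg _).trans (hp π le_rfl)) (by positivity)
  have hkx : π ≤ k ^ 2 * x := hx.trans (le_mul_of_one_le_left hx0 (by nlinarith))
  have hpow : (k ^ 2) ^ j ≤ 256 ^ (m + 1) := by
    have hk2 : k ≤ 2 ^ (m + 1) := by
      have : ((m + 2 : ℕ) : ℝ) ≤ ((2 ^ (m + 1) : ℕ) : ℝ) := by exact_mod_cast Nat.lt_two_pow_self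
      simpa [hk_def] using this
    calc (k ^ 2) ^ j = k ^ (2 * j) := by rw [pow_mul]
      _ ≤ k ^ 8 := pow_le_pow_right₀ (by linarith) (by omega)
      _ ≤ (2 ^ (m + 1)) ^ 8 := by gcongr
      _ = 256 ^ (m + 1) := by rw [← pow_mul, mul_comm, pow_mul]; norm_num
  have hexp : exp (-(k ^ 2 * x)) ≤ exp (-(4 * x)) ^ (m + 1) := by
    have hk4 : 4 * ((m : ℝ) + 1) ≤ k ^ 2 := by rw [hk_def]; nlinarith [sq_nonneg (m : ℝ)]
    rw [← exp_nat_mul, exp_le_exp]; push_cast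
    nlinarith [mul_le_mul_of_nonneg_right hk4 hx0]
  calc |thetaTerm p (π * k ^ 2) u| = exp u * |p.eval (k ^ 2 * x)| * exp (-(k ^ 2 * x)) := by
        rw [thetaTerm, abs_mul, abs_mul, abs_of_pos (exp_pos _), abs_of_pos (exp_pos _), hx_def]
        ring_nf
    _ ≤ exp u * (c * (k ^ 2 * x) ^ j) * exp (-(k ^ 2 * x)) := by gcongr; exact hp _ hkx
    _ = exp u * (c * x ^ j) * ((k ^ 2) ^ j * exp (-(k ^ 2 * x))) := by rw [mul_pow]; ring
    _ ≤ exp u * (c * x ^ j) * (256 ^ (m + 1) * exp (-(4 * x)) ^ (m + 1)) := by gcongr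
    _ = exp u * (c * x ^ j) * (256 * exp (-(4 * x))) ^ (m + 1) := by rw [← mul_pow]

theorem thetaSeries_eq_mul_add {p : ℝ[X]} {c : ℝ} {j : ℕ} (hj : j ≤ 4)
    (hp : ∀ y, π ≤ y → |p.eval y| ≤ c * y ^ j) {u : ℝ} (hu : 0 ≤ u) :
    ∃ T, |T| ≤ thetaTailRatio (π * exp (4 * u)) * (c * (π * exp (4 * u)) ^ j) ∧
      thetaSeries p u = exp u * exp (-(π * exp (4 * u))) * (p.eval (π * exp (4 * u)) + T) := by
  set x := π * exp (4 * u)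
  have hx : π ≤ x := pi_le_pi_mul_exp_four_mul hu
  set r := 256 * exp (-(4 * x)) with hr_def
  have hr1 : r < 1 := (mul_exp_neg_four_mul_le hx).trans_lt (by norm_num)
  set C := exp u * (c * x ^ j)
  have hgeom : HasSum (fun m : ℕ => C * r ^ (m + 1)) (C * r / (1 - r)) := by
    have := (hasSum_geometric_of_lt_one (by positivity) hr1).mul_left (C * r)
    simpa only [pow_succ', ← mul_assoc, div_eq_mul_inv] using this
  have htail : |∑' m : ℕ, thetaTerm p (π * ((m : ℝ) + 2) ^ 2) u| ≤ C * r / (1 - r) :=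
    tsum_of_norm_bounded (f := fun m : ℕ => thetaTerm p (π * ((m : ℝ) + 2) ^ 2) u) hgeom
      (abs_thetaTerm_tail_le hj hp hu)
  have hK : 0 < exp u * exp (-x) := by positivity
  refine ⟨(∑' m : ℕ, thetaTerm p (π * ((m : ℝ) + 2) ^ 2) u) / (exp u * exp (-x)), ?_, ?_⟩
  · rw [abs_div, abs_of_pos hK, div_le_iff₀ hK]
    refine htail.trans (le_of_eq ?_)
    have : exp (-(4 * x)) = exp (-(3 * x)) * exp (-x) := by rw [← exp_add]; ring_nf
    rw [thetaTailRatio, hr_def, this]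
    field_simp
    ring
  · rw [thetaSeries, (summable_thetaTerm p u).tsum_eq_zero_add]
    have hshift : ∀ m : ℕ, π * (((m + 1 : ℕ) : ℝ) + 1) ^ 2 = π * ((m : ℝ) + 2) ^ 2 := fun m => by
      push_cast; ring
    simp only [hshift, Nat.cast_zero, zero_add, one_pow, mul_one]
    rw [mul_add, mul_div_cancel₀ _ hK.ne', thetaTerm]
    ring

theorem mul_sub_sq_lt_zero_of_perturb {a b c α β γ A B C ε : ℝ}
    (ha : |a| ≤ A) (hb : |b| ≤ B) (hc : |c| ≤ C)
    (hα : |α| ≤ ε * A) (hβ : |β| ≤ ε * B) (hγ : |γ| ≤ ε * C)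
    (hgap : a * c - b ^ 2 + ε * ((2 + ε) * A * C + 2 * B ^ 2) < 0) :
    (a + α) * (c + γ) - (b + β) ^ 2 < 0 := by
  have prod_le : ∀ {s t S T : ℝ}, |s| ≤ S → |t| ≤ T → s * t ≤ S * T := fun hs ht =>
    (le_abs_self _).trans <| by
      rw [abs_mul]; exact mul_le_mul hs ht (abs_nonneg _) ((abs_nonneg _).trans hs)
  have h₁ := prod_le ha hγ
  have h₂ := prod_le hα hc
  have h₃ := prod_le hα hγ
  have h₄ := prod_le (abs_neg b ▸ hb) hβ
  nlinarith [sq_nonneg β]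

theorem phiPoly_wronskian_gap {x ε : ℝ} (hx : π ≤ x) (hε : 0 ≤ ε) (hε1 : ε ≤ 1 / 40)
    (hxε : x * ε ≤ 0.076) :
    (2 * x ^ 2 - 3 * x) * (32 * x ^ 4 - 224 * x ^ 3 + 330 * x ^ 2 - 75 * x)
      - (-8 * x ^ 3 + 30 * x ^ 2 - 15 * x) ^ 2
      + ε * ((2 + ε) * (2 * x ^ 2) * (32 * x ^ 4) + 2 * (8 * x ^ 3) ^ 2) < 0 := by
  have hx0 : 0 < x := pi_pos.trans_le hx
  have hsmall : x * ε * (4 + ε) ≤ 0.31 := by nlinarith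
  have hx5 : 0 < x ^ 5 := by positivity
  have hmain : 25.6 * x ^ 5 ≤ 16 * x ^ 3 * (4 * x ^ 2 - 12 * x + 15) := by
    have : 0 ≤ 16 * x ^ 3 * (2.4 * (x - 2.5) ^ 2) := by positivity
    nlinarith
  have key : (2 * x ^ 2 - 3 * x) * (32 * x ^ 4 - 224 * x ^ 3 + 330 * x ^ 2 - 75 * x)
      - (-8 * x ^ 3 + 30 * x ^ 2 - 15 * x) ^ 2
      + ε * ((2 + ε) * (2 * x ^ 2) * (32 * x ^ 4) + 2 * (8 * x ^ 3) ^ 2)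
      = -(16 * x ^ 3 * (4 * x ^ 2 - 12 * x + 15)) + 64 * x ^ 5 * (x * ε * (4 + ε)) := by ring
  rw [key]
  nlinarith [mul_le_mul_of_nonneg_left hsmall hx5.le]

end

theorem stmt_4 (u : ℝ) (hu : 0 ≤ u) :
    Phi u * deriv (deriv Phi) u - (deriv Phi u)^2 < 0 := by
  set x := π * exp (4 * u)
  have hx : π ≤ x := pi_le_pi_mul_exp_four_mul hu
  obtain ⟨T₀, hT₀, h₀⟩ := thetaSeries_eq_mul_add (by norm_num) (fun _ => abs_eval_phiPoly_le) hu
  obtain ⟨T₁, hT₁, h₁⟩ :=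
    thetaSeries_eq_mul_add (by norm_num) (fun _ => abs_eval_thetaDeriv_phiPoly_le) hu
  obtain ⟨T₂, hT₂, h₂⟩ :=
    thetaSeries_eq_mul_add (by norm_num) (fun _ => abs_eval_thetaDeriv_thetaDeriv_phiPoly_le) hu
  obtain ⟨hε₀, hε, hxε⟩ := thetaTailRatio_bounds hx
  have hdet := mul_sub_sq_lt_zero_of_perturb (abs_eval_phiPoly_le hx)
    (abs_eval_thetaDeriv_phiPoly_le hx) (abs_eval_thetaDeriv_thetaDeriv_phiPoly_le hx) hT₀ hT₁ hT₂
    (by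
      rw [eval_phiPoly, eval_thetaDeriv_phiPoly, eval_thetaDeriv_thetaDeriv_phiPoly]
      exact phiPoly_wronskian_gap hx hε₀ hε hxε)
  have hK : 0 < (exp u * exp (-x)) ^ 2 := by positivity
  rw [Phi_eq_thetaSeries, deriv_thetaSeries, deriv_thetaSeries, h₀, h₁, h₂]
  linarith [mul_neg_of_pos_of_neg hK hdet]
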